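/- For any two universal partial recursive functions U and U', there exists a constant c such that for every finite string s, the Algorithmic Information Content of s relative to U is at most the Algorithmic Information Content of s relative to U' plus c. -/

import Mathlib

/-!
A universal `U` simulates `U'` with a constant overhead `c`, so a shortest `U'`-program for `s`
translates into a `U`-program for `s` at most `c` bits longer. The only other case is a string
that `U'` never outputs, whose `AIC` is the junk value `sInf ∅ = 0`; since `U'` is universal too
and `U` is partial recursive, `U` never outputs such a string either, so its `AIC` is `0` as well.
-/

/-- Algorithmic Information Content of `s` relative to machine `U`:
the length of the shortest binary program `p` with `U p = s`. -/
noncomputable def AIC {A : Type} [Primcodable A] (U : List Bool →. List A) (s : List A) : ℕ :=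
  sInf {n | ∃ p : List Bool, p.length = n ∧ s ∈ U p}

/-- `U` is a universal partial recursive function: it is partial recursive and can
simulate any partial recursive `C` with bounded program-length overhead. -/
def Universal {A : Type} [Primcodable A] (U : List Bool →. List A) : Prop :=
  Partrec U ∧ ∀ C : List Bool →. List A, Partrec C →
    ∃ c : ℕ, ∀ (p : List Bool) (s : List A), s ∈ C p →
      ∃ q : List Bool, s ∈ U q ∧ q.length ≤ p.length + c

section AIC

variable {A : Type} [Primcodable A] {U C : List Bool →. List A} {s : List A}

theorem AIC_le_length {p : List Bool} (h : s ∈ U p) : AIC U s ≤ p.length :=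
  Nat.sInf_le ⟨p, rfl, h⟩

theorem exists_length_eq_AIC (h : ∃ p, s ∈ U p) : ∃ p, s ∈ U p ∧ p.length = AIC U s := by
  obtain ⟨p, hp⟩ := h
  have hne : {n | ∃ q : List Bool, q.length = n ∧ s ∈ U q}.Nonempty := ⟨p.length, p, rfl, hp⟩
  obtain ⟨q, hq, hqs⟩ := Nat.sInf_mem hne
  exact ⟨q, hqs, hq⟩

theorem AIC_eq_zero_of_forall_notMem (h : ∀ p, s ∉ U p) : AIC U s = 0 := by
  have hempty : {n | ∃ p : List Bool, p.length = n ∧ s ∈ U p} = ∅ :=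
    Set.eq_empty_of_forall_notMem fun _ ⟨p, _, hp⟩ => h p hp
  rw [AIC, hempty, Nat.sInf_empty]

theorem AIC_le_AIC_add_of_simulates {c : ℕ}
    (hsim : ∀ (p : List Bool) (t : List A), t ∈ C p →
      ∃ q : List Bool, t ∈ U q ∧ q.length ≤ p.length + c)
    (hrange : (∃ p, s ∈ U p) → ∃ p, s ∈ C p) :
    AIC U s ≤ AIC C s + c := by
  by_cases hs : ∃ p, s ∈ C p
  · obtain ⟨p, hp, hlen⟩ := exists_length_eq_AIC hs
    obtain ⟨q, hq, hqlen⟩ := hsim p s hp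
    calc AIC U s ≤ q.length := AIC_le_length hq
      _ ≤ p.length + c := hqlen
      _ = AIC C s + c := by rw [hlen]
  · have hnone : ∀ p, s ∉ U p := fun p hp => hs (hrange ⟨p, hp⟩)
    rw [AIC_eq_zero_of_forall_notMem hnone]
    exact Nat.zero_le _

end AIC

theorem Universal.exists_mem_of_partrec {A : Type} [Primcodable A] {U C : List Bool →. List A}
    (hU : Universal U) (hC : Partrec C) {s : List A} (h : ∃ p, s ∈ C p) : ∃ q, s ∈ U q := by
  obtain ⟨c, hc⟩ := hU.2 C hC
  obtain ⟨p, hp⟩ := h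
  obtain ⟨q, hq, -⟩ := hc p s hp
  exact ⟨q, hq⟩

/-- for any two universal machines `U`, `U'` there is a constant `c`
with `I_AIC(s, U) ≤ I_AIC(s, U') + c` for all strings `s`. -/
theorem aic_universal_invariance {A : Type} [Primcodable A]
    (U U' : List Bool →. List A) (hU : Universal U) (hU' : Universal U') :
    ∃ c : ℕ, ∀ s : List A, AIC U s ≤ AIC U' s + c := by
  obtain ⟨c, hc⟩ := hU.2 U' hU'.1
  exact ⟨c, fun _ => AIC_le_AIC_add_of_simulates hc (hU'.exists_mem_of_partrec hU.1)⟩
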